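/- arXiv:math/0504362 — 3 statements merged into one kernel-verified Lean document; each statement's English description precedes it below -/
import Mathlib

section
/- Let Γ be a group and let Γ₁ ≤ Γ₀ ≤ Γ be subgroups. Then the following two conditions are equivalent. (A) For every finite list of elements x₁, …, x_m ∈ Γ, if Γ₁ ⊆ ⋃_{i,j=1}^m x_i Γ₀ x_j (as subsets of Γ), then x_i ∈ Γ₀ for some i. (B) For every finite lists x₁, …, x_n ∈ Γ and y₁, …, y_n ∈ Γ with x_i ∉ Γ₀ and y_j ∉ Γ₀ for all i, j, there exists γ₀ ∈ Γ₁ such that x_i γ₀ y_j ∉ Γ₀ for all 1 ≤ i, j ≤ n. -/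
namespace Subgroup

variable {G : Type*} [Group G] (H : Subgroup G)

theorem mem_image_mul_mul_iff {a b γ : G} :
    γ ∈ (fun g => a * g * b) '' (H : Set G) ↔ a⁻¹ * γ * b⁻¹ ∈ H := by
  constructor
  · rintro ⟨g, hg, rfl⟩
    simpa [mul_assoc] using hg
  · exact fun h => ⟨_, h, by group⟩

theorem subset_iUnion_image_mul_mul_iff {ι : Type*} (K : Set G) (x : ι → G) :
    K ⊆ ⋃ (i : ι) (j : ι), (fun g => x i * g * x j) '' (H : Set G) ↔
      ¬ ∃ γ ∈ K, ∀ i j, (x i)⁻¹ * γ * (x j)⁻¹ ∉ H := by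
  simp only [Set.subset_def, Set.mem_iUnion, mem_image_mul_mul_iff]
  push Not
  rfl

end Subgroup

theorem stmt0_general {Γ : Type*} [Group Γ] (Γ₀ Γ₁ : Subgroup Γ) :
    (∀ (m : ℕ) (x : Fin m → Γ),
        (Γ₁ : Set Γ) ⊆ ⋃ (i : Fin m) (j : Fin m),
          (fun g => x i * g * x j) '' (Γ₀ : Set Γ) →
        ∃ i, x i ∈ Γ₀) ↔
    (∀ (n : ℕ) (x y : Fin n → Γ), (∀ i, x i ∉ Γ₀) → (∀ j, y j ∉ Γ₀) →
        ∃ γ₀ ∈ Γ₁, ∀ i j, x i * γ₀ * y j ∉ Γ₀) := by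
  constructor
  · intro hA n x y hx hy
    by_contra hcover
    -- Inverting `x` and `y` turns `x i * γ * y j` into the shape `(z k)⁻¹ * γ * (z l)⁻¹`.
    let z : Fin (n + n) → Γ := Fin.append (fun i => (x i)⁻¹) (fun j => (y j)⁻¹)
    have hz : ∀ k, z k ∉ Γ₀ :=
      Fin.addCases (by simpa only [z, Fin.append_left, inv_mem_iff])
        (by simpa only [z, Fin.append_right, inv_mem_iff])
    have hsub : (Γ₁ : Set Γ) ⊆ ⋃ (k : Fin (n + n)) (l : Fin (n + n)),
        (fun g => z k * g * z l) '' (Γ₀ : Set Γ) := by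
      rw [Γ₀.subset_iUnion_image_mul_mul_iff]
      rintro ⟨γ, hγ, havoid⟩
      refine hcover ⟨γ, hγ, fun i j => ?_⟩
      simpa only [z, Fin.append_left, Fin.append_right, inv_inv]
        using havoid (Fin.castAdd n i) (Fin.natAdd n j)
    obtain ⟨k, hk⟩ := hA _ z hsub
    exact hz k hk
  · intro hB m x hsub
    by_contra! hx
    refine (Γ₀.subset_iUnion_image_mul_mul_iff _ x).1 hsub ?_
    exact hB m _ _ (fun i => by simpa using hx i) (fun j => by simpa using hx j)

/-- Lemma 3.4 (group-theoretic reduction): for subgroups `Γ₁ ≤ Γ₀ ≤ Γ`, the condition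
"whenever `Γ₁ ⊆ ⋃_{i,j} xᵢ Γ₀ xⱼ`, some `xᵢ ∈ Γ₀`" is equivalent to the condition
"for finite lists of elements outside `Γ₀` there is `γ₀ ∈ Γ₁` with all `xᵢ γ₀ yⱼ ∉ Γ₀`". -/
theorem stmt0 {Γ : Type*} [Group Γ] (Γ₀ Γ₁ : Subgroup Γ) (hle : Γ₁ ≤ Γ₀) :
    (∀ (m : ℕ) (x : Fin m → Γ),
        (Γ₁ : Set Γ) ⊆ ⋃ (i : Fin m) (j : Fin m),
          (fun g => x i * g * x j) '' (Γ₀ : Set Γ) →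
        ∃ i, x i ∈ Γ₀) ↔
    (∀ (n : ℕ) (x y : Fin n → Γ), (∀ i, x i ∉ Γ₀) → (∀ j, y j ∉ Γ₀) →
        ∃ γ₀ ∈ Γ₁, ∀ i j, x i * γ₀ * y j ∉ Γ₀) :=
  stmt0_general Γ₀ Γ₁
end

section
/- Let Γ be a group, let Γ₀ and Γ₁ be subgroups of Γ, let u : Γ → ℂ be square-summable, and let x₀ ∈ Γ satisfy u(x₀) ≠ 0. Suppose that for every z ∈ Γ₁ there exists a function f_z : Γ → ℂ supported in Γ₀ with ∑_{t ∈ Γ} |f_z(t)|² ≤ 1 such that the family (f_z(t) u(t⁻¹ x₀ z))_{t ∈ Γ₀} is summable with u(x₀) = ∑_{t ∈ Γ₀} f_z(t) u(t⁻¹ x₀ z). Then the set of right cosets {Γ₀ x₀ z : z ∈ Γ₁} is finite; that is, x₀Γ₁ is contained in the union of finitely many right cosets of Γ₀. -/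
/-!
By Cauchy–Schwarz and `∑ |f_z|² ≤ 1`, `|u(x₀)|² ≤ ∑_{t ∈ Γ₀} |u(t⁻¹x₀z)|²`, and the right-hand
side is the `ℓ²` mass of `u` on the right coset `Γ₀x₀z`. Distinct right cosets are disjoint, so
each of them carrying mass at least `|u(x₀)|² > 0` out of the finite total `∑ |u|²` leaves room
for only finitely many.
-/

open MulAction

theorem norm_tsum_mul_le_sqrt_mul_sqrt {ι R : Type*} [NonUnitalSeminormedRing R] {f g : ι → R}
    (hf : Summable fun i => ‖f i‖ ^ 2) (hg : Summable fun i => ‖g i‖ ^ 2) :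
    ‖∑' i, f i * g i‖ ≤ √(∑' i, ‖f i‖ ^ 2) * √(∑' i, ‖g i‖ ^ 2) := by
  simp only [Real.sqrt_eq_rpow, ← Real.rpow_two] at hf hg ⊢
  obtain ⟨hfg, hle⟩ := Real.summable_and_inner_le_Lp_mul_Lq_tsum_of_nonneg .two_two
    (fun i => norm_nonneg (f i)) (fun i => norm_nonneg (g i)) hf hg
  have hnorm : Summable fun i => ‖f i * g i‖ :=
    hfg.of_nonneg_of_le (fun i => norm_nonneg _) fun i => norm_mul_le _ _
  calc ‖∑' i, f i * g i‖ ≤ ∑' i, ‖f i * g i‖ := norm_tsum_le_tsum_norm hnorm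
    _ ≤ ∑' i, ‖f i‖ * ‖g i‖ := hnorm.tsum_le_tsum (fun i => norm_mul_le _ _) hfg
    _ ≤ _ := hle

theorem Set.PairwiseDisjoint.finite_of_le_tsum {α : Type*} {S : Set (Set α)}
    (hS : S.PairwiseDisjoint id) {f : α → ℝ} (hf : Summable f) {ε : ℝ} (hε : 0 < ε)
    (hle : ∀ s ∈ S, ε ≤ ∑' x : s, f x) : S.Finite := by
  have hinj : Function.Injective fun p : Σ s : S, (s : Set α) => (p.2 : α) := by
    rintro ⟨s, x⟩ ⟨t, y⟩ (hxy : (x : α) = y)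
    have hst : s = t := Subtype.ext (hS.elim_set s.2 t.2 x x.2 (hxy ▸ y.2))
    exact Sigma.subtype_ext hst hxy
  have hsmall := (hf.comp_injective hinj).sigma.tendsto_cofinite_zero.eventually
    (gt_mem_nhds hε)
  rw [Filter.eventually_cofinite] at hsmall
  exact Set.finite_coe_iff.mp <| Set.finite_univ_iff.mp <|
    hsmall.subset fun s _ => not_lt.2 (hle s s.2)

namespace Subgroup

variable {G : Type*} [Group G] (H : Subgroup G)

theorem image_mul_right_eq_orbit (y : G) : (· * y) '' (H : Set G) = orbit H y := by
  rw [orbit_subgroup_eq_rightCoset, ← Set.image_smul]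
  rfl

theorem tsum_orbit_eq_tsum_inv_mul {M : Type*} [AddCommMonoid M] [TopologicalSpace M]
    (f : G → M) (y : G) : ∑' x : orbit H y, f x = ∑' t : H, f ((t : G)⁻¹ * y) := by
  rw [orbit, tsum_range (g := fun t : H => t • y) f
    fun a b (hab : (a : G) * y = b * y) => Subtype.ext (mul_right_cancel hab)]
  exact ((Equiv.inv H).tsum_eq fun t : H => f (t * y)).symm

theorem sq_norm_tsum_le_tsum_orbit {R : Type*} [NonUnitalSeminormedRing R] {u f : G → R}
    (hu : Summable fun x => ‖u x‖ ^ 2) (hf : Summable fun t => ‖f t‖ ^ 2)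
    (hf_le : ∑' t, ‖f t‖ ^ 2 ≤ 1) (y : G) :
    ‖∑' t : H, f t * u ((t : G)⁻¹ * y)‖ ^ 2 ≤ ∑' x : orbit H y, ‖u x‖ ^ 2 := by
  have hinj : Function.Injective fun t : H => (t : G)⁻¹ * y :=
    (mul_left_injective y).comp (inv_injective.comp Subtype.val_injective)
  have hfH : ∑' t : H, ‖f t‖ ^ 2 ≤ 1 :=
    (hf.tsum_subtype_le _ H fun t => sq_nonneg _).trans hf_le
  have huH : 0 ≤ ∑' t : H, ‖u ((t : G)⁻¹ * y)‖ ^ 2 := tsum_nonneg fun t => sq_nonneg _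
  calc ‖∑' t : H, f t * u ((t : G)⁻¹ * y)‖ ^ 2
      ≤ (√(∑' t : H, ‖f t‖ ^ 2) * √(∑' t : H, ‖u ((t : G)⁻¹ * y)‖ ^ 2)) ^ 2 :=
        pow_le_pow_left₀ (norm_nonneg _)
          (norm_tsum_mul_le_sqrt_mul_sqrt (hf.subtype _) (hu.comp_injective hinj)) 2
    _ = (∑' t : H, ‖f t‖ ^ 2) * ∑' t : H, ‖u ((t : G)⁻¹ * y)‖ ^ 2 := by
        rw [mul_pow, Real.sq_sqrt (tsum_nonneg fun t => sq_nonneg _), Real.sq_sqrt huH]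
    _ ≤ ∑' t : H, ‖u ((t : G)⁻¹ * y)‖ ^ 2 := mul_le_of_le_one_left huH hfH
    _ = ∑' x : orbit H y, ‖u x‖ ^ 2 := (H.tsum_orbit_eq_tsum_inv_mul (fun x => ‖u x‖ ^ 2) y).symm

end Subgroup

/-- Equation (3.1) ("modified") in the proof of Theorem 3.1: if `u ∈ ℓ²(Γ)`, `u(x₀) ≠ 0`, and
for every `z ∈ Γ₁` there is `f_z` supported in `Γ₀` with `∑ |f_z|² ≤ 1` and
`u(x₀) = ∑_{t ∈ Γ₀} f_z(t) u(t⁻¹ x₀ z)`, then `x₀Γ₁` is contained in a finite union of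
right cosets of `Γ₀`, i.e. the set of right cosets `{Γ₀x₀z : z ∈ Γ₁}` is finite. -/
theorem stmt3 {Γ : Type*} [Group Γ] (Γ₀ Γ₁ : Subgroup Γ) (u : Γ → ℂ)
    (hu : Summable fun x : Γ => ‖u x‖ ^ 2) (x₀ : Γ) (hx₀ : u x₀ ≠ 0)
    (h : ∀ z ∈ Γ₁, ∃ f : Γ → ℂ,
        (∀ t : Γ, t ∉ Γ₀ → f t = 0) ∧
        (Summable fun t : Γ => ‖f t‖ ^ 2) ∧
        (∑' t : Γ, ‖f t‖ ^ 2 ≤ 1) ∧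
        Summable (fun t : Γ₀ => f t * u ((t : Γ)⁻¹ * (x₀ * z))) ∧
        u x₀ = ∑' t : Γ₀, f t * u ((t : Γ)⁻¹ * (x₀ * z))) :
    {C : Set Γ | ∃ z ∈ Γ₁, C = (fun g => g * (x₀ * z)) '' (Γ₀ : Set Γ)}.Finite := by
  have h_orbits : {C : Set Γ | ∃ z ∈ Γ₁, C = (fun g => g * (x₀ * z)) '' (Γ₀ : Set Γ)} ⊆
      Set.range (orbit Γ₀) := by
    rintro _ ⟨z, -, rfl⟩
    exact ⟨x₀ * z, (Γ₀.image_mul_right_eq_orbit _).symm⟩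
  refine (orbit.pairwiseDisjoint.subset h_orbits).finite_of_le_tsum hu
    (pow_pos (norm_pos_iff.2 hx₀) 2) ?_
  rintro _ ⟨z, hz, rfl⟩
  obtain ⟨f, -, hf, hf_le, -, hf_u⟩ := h z hz
  rw [Γ₀.image_mul_right_eq_orbit, hf_u]
  exact Γ₀.sq_norm_tsum_le_tsum_orbit hu hf hf_le _
end

section
/- Let ι be a nonempty finite index set, let δ ≥ 0, and for each i ∈ ι let f_i : ℝ → ℝ be a function that is convex on the interval [0, ∞). Suppose that for every t ≥ 0 there exists i ∈ ι with f_i(t) ≤ δ. Then there exists i ∈ ι such that f_i(t) ≤ max(f_i(0), δ) for all t ≥ 0; in particular some f_i is bounded above on [0, ∞). -/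
/-- The convexity argument from the proof of Theorem 3.6: if finitely many functions
`f i : ℝ → ℝ` are convex on `[0, ∞)` and at each `t ≥ 0` at least one of them is `≤ δ`,
then some single `f i` satisfies `f i t ≤ max (f i 0) δ` for all `t ≥ 0`; in particular
that `f i` is bounded above on `[0, ∞)`. -/
theorem stmt5 {ι : Type*} [Fintype ι] [Nonempty ι] (δ : ℝ) (hδ : 0 ≤ δ)
    (f : ι → ℝ → ℝ) (hconv : ∀ i, ConvexOn ℝ (Set.Ici (0 : ℝ)) (f i))
    (hcov : ∀ t : ℝ, 0 ≤ t → ∃ i, f i t ≤ δ) :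
    ∃ i, ∀ t : ℝ, 0 ≤ t → f i t ≤ max (f i 0) δ := by
  choose g hg using fun n : ℕ => hcov n (Nat.cast_nonneg n)
  obtain ⟨i, hi⟩ := Finite.exists_infinite_fiber g
  refine ⟨i, fun t ht => ?_⟩
  have hi' : (g ⁻¹' {i}).Infinite := Set.infinite_coe_iff.mp hi
  obtain ⟨n, hn, hlt⟩ := hi'.exists_gt ⌈t⌉₊
  have hgn : g n = i := hn
  have htn : t < (n : ℝ) := lt_of_le_of_lt (Nat.le_ceil t) (by exact_mod_cast hlt)
  have hnpos : (0 : ℝ) < n := lt_of_le_of_lt ht htn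
  set a : ℝ := ((n : ℝ) - t) / n with ha
  set b : ℝ := t / n with hb
  have ha0 : 0 ≤ a := div_nonneg (by linarith) hnpos.le
  have hb0 : 0 ≤ b := div_nonneg ht hnpos.le
  have hab : a + b = 1 := by rw [ha, hb, ← add_div, sub_add_cancel, div_self hnpos.ne']
  have hcomb : a • (0 : ℝ) + b • (n : ℝ) = t := by
    rw [smul_eq_mul, smul_eq_mul, mul_zero, zero_add, hb, div_mul_cancel₀ t hnpos.ne']
  have key := (hconv i).2 (Set.self_mem_Ici) (Set.mem_Ici.mpr hnpos.le) ha0 hb0 hab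
  rw [hcomb] at key
  have hfn : f i n ≤ δ := by rw [← hgn]; exact hg n
  have hM0 : f i 0 ≤ max (f i 0) δ := le_max_left _ _
  have hMn : f i n ≤ max (f i 0) δ := le_trans hfn (le_max_right _ _)
  calc f i t ≤ a • f i 0 + b • f i n := key
    _ ≤ a * max (f i 0) δ + b * max (f i 0) δ := by
        exact add_le_add (mul_le_mul_of_nonneg_left hM0 ha0)
          (mul_le_mul_of_nonneg_left hMn hb0)
    _ = max (f i 0) δ := by rw [← add_mul, hab, one_mul]
end
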